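/- Let K be a simplicial complex on the index set [n] and let L be a subcomplex of K on the vertices {1, …, m}, where m ≤ n. Suppose that each vertex {i} ∈ K for m+1 ≤ i ≤ n. Let X̂ = ∏_{i=m+1}^n X_i, and let I : (CX,X)^L × X̂ → (CX,X)^K be the inclusion induced by the inclusion L → K. Then the restriction of I to X̂ is null homotopic. -/

import Mathlib

noncomputable section

open ContinuousMap

/-! ### Basic point-set constructions -/

/-- The quotient of `X` collapsing the subset `S` to a single point. -/
abbrev Collapse {X : Type*} [TopologicalSpace X] (S : Set X) : Type _ :=
  Quot (fun a b : X => a ∈ S ∧ b ∈ S)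

namespace Collapse

variable {X Y : Type*} [TopologicalSpace X] [TopologicalSpace Y]

/-- The quotient map. -/
def mk (S : Set X) (x : X) : Collapse S := Quot.mk _ x

lemma continuous_mk {S : Set X} : Continuous (mk S) := continuous_quot_mk

/-- The quotient map as a continuous map. -/
def mkCM (S : Set X) : C(X, Collapse S) := ⟨mk S, continuous_mk⟩

/-- A continuous map sending `S` into `T` descends to the collapsed spaces. -/
def desc {S : Set X} {T : Set Y} (f : C(X, Y)) (h : Set.MapsTo f S T) :
    C(Collapse S, Collapse T) :=
  ⟨Quot.lift (fun x => mk T (f x)) (fun a b hab => Quot.sound ⟨h hab.1, h hab.2⟩),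
    continuous_quot_lift _ (continuous_mk.comp f.continuous)⟩

end Collapse

/-- The (unreduced) cone on a space: `CX = (X × I)/(X × {1})`, containing `X`
as the subspace `X × {0}`. -/
abbrev Cone (X : Type*) [TopologicalSpace X] : Type _ :=
  Collapse {p : X × unitInterval | p.2 = 1}

/-- The canonical inclusion of the base `X` into the cone `CX`. -/
def Cone.incl {X : Type*} [TopologicalSpace X] : C(X, Cone X) :=
  ⟨fun x => Collapse.mk _ (x, 0),
    Collapse.continuous_mk.comp (continuous_id.prodMk continuous_const)⟩

/-- The join `A ∗ B = A × I × B / ∼`, where `(a, 0, b) ∼ (a, 0, b')` and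
`(a, 1, b) ∼ (a', 1, b)`. -/
abbrev Join (A B : Type*) [TopologicalSpace A] [TopologicalSpace B] : Type _ :=
  Quot (fun p q : A × unitInterval × B =>
    (p.2.1 = 0 ∧ q.2.1 = 0 ∧ p.1 = q.1) ∨ (p.2.1 = 1 ∧ q.2.1 = 1 ∧ p.2.2 = q.2.2))

/-- Points of the join. -/
def Join.mk {A B : Type*} [TopologicalSpace A] [TopologicalSpace B]
    (a : A) (t : unitInterval) (b : B) : Join A B :=
  Quot.mk _ (a, t, b)

/-- The join of a finite family of spaces: formal convex combinations
`t₁ x₁ + ⋯ + tₙ xₙ`, where the coordinate `xᵢ` is irrelevant when `tᵢ = 0`. -/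
abbrev JoinFamily {ι : Type*} [Fintype ι] (Y : ι → Type*) [∀ i, TopologicalSpace (Y i)] :
    Type _ :=
  Quot (fun p q : (∀ i, Y i) × (stdSimplex ℝ ι) =>
    p.2 = q.2 ∧ ∀ i, (p.2 : ι → ℝ) i ≠ 0 → p.1 i = q.1 i)

/-- Points of the join of a family. -/
def JoinFamily.mk {ι : Type*} [Fintype ι] {Y : ι → Type*} [∀ i, TopologicalSpace (Y i)]
    (y : ∀ i, Y i) (t : stdSimplex ℝ ι) : JoinFamily Y :=
  Quot.mk _ (y, t)

/-- The vertex of the standard simplex corresponding to `i₀`. -/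
def stdSimplexVertex {ι : Type*} [Fintype ι] [DecidableEq ι] (i₀ : ι) : stdSimplex ℝ ι :=
  ⟨fun j => if j = i₀ then 1 else 0,
    fun j => by dsimp only; split <;> norm_num, by simp⟩

/-- The smash product `A ∧ B = (A × B)/(A ∨ B)`. -/
abbrev Smash (A B : Type*) [TopologicalSpace A] [TopologicalSpace B] (a₀ : A) (b₀ : B) :
    Type _ :=
  Collapse {p : A × B | p.1 = a₀ ∨ p.2 = b₀}

/-- The right half-smash `A ⋊ B = (A × B)/(∗ × B)`. -/
abbrev RHalfSmash (A B : Type*) [TopologicalSpace A] [TopologicalSpace B] (a₀ : A) : Type _ :=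
  Collapse {p : A × B | p.1 = a₀}

/-- The left half-smash `A ⋉ B = (A × B)/(A × ∗)`. -/
abbrev LHalfSmash (A B : Type*) [TopologicalSpace A] [TopologicalSpace B] (b₀ : B) : Type _ :=
  Collapse {p : A × B | p.2 = b₀}

/-- The reduced suspension `ΣA = (A × I)/(A × {0} ∪ A × {1} ∪ {a₀} × I)`. -/
abbrev Susp (A : Type*) [TopologicalSpace A] (a₀ : A) : Type _ :=
  Collapse {p : A × unitInterval | p.1 = a₀ ∨ p.2 = 0 ∨ p.2 = 1}

/-- The basepoint of the reduced suspension. -/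
def Susp.pt (A : Type*) [TopologicalSpace A] (a₀ : A) : Susp A a₀ :=
  Collapse.mk _ (a₀, 0)

/-- The map `Σf` induced on reduced suspensions by a pointed map `f`. -/
def Susp.map {A B : Type*} [TopologicalSpace A] [TopologicalSpace B] {a₀ : A} {b₀ : B}
    (f : C(A, B)) (hf : f a₀ = b₀) : C(Susp A a₀, Susp B b₀) :=
  Collapse.desc ⟨fun p => (f p.1, p.2), (f.continuous.comp continuous_fst).prodMk continuous_snd⟩
    (fun p hp => by
      rcases hp with h | h
      · exact Or.inl (by simp [h, hf])
      · exact Or.inr h)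

/-- The `m`-fold reduced suspension
`Σ^m A = (A × I^m)/(A × ∂(I^m) ∪ {a₀} × I^m)`. -/
abbrev iSusp (m : ℕ) (A : Type*) [TopologicalSpace A] (a₀ : A) : Type _ :=
  Collapse {p : A × (Fin m → unitInterval) | p.1 = a₀ ∨ ∃ j, p.2 j = 0 ∨ p.2 j = 1}

/-- The smash product of a finite family of pointed spaces:
`⋀ᵢ Yᵢ = (∏ᵢ Yᵢ)/(fat wedge)`. -/
abbrev bigSmash {ι : Type*} (Y : ι → Type*) [∀ i, TopologicalSpace (Y i)]
    (pt : ∀ i, Y i) : Type _ :=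
  Collapse {f : ∀ i, Y i | ∃ i, f i = pt i}

/-- The wedge sum `A ∨ B`. -/
abbrev Wedge (A B : Type*) [TopologicalSpace A] [TopologicalSpace B] (a₀ : A) (b₀ : B) :
    Type _ :=
  Collapse {x : A ⊕ B | x = Sum.inl a₀ ∨ x = Sum.inr b₀}

/-- The wedge of a family of spaces, each with a designated basepoint set `S i`
(each `S i` should be a single point of `Y i`, possibly presented as a subset);
an extra disjoint point is wedged on so that the empty wedge is a point. -/
abbrev BigWedge {ι : Type*} (Y : ι → Type*) [∀ i, TopologicalSpace (Y i)]
    (S : ∀ i, Set (Y i)) : Type _ :=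
  Collapse {p : (Σ i, Y i) ⊕ Unit |
    Sum.elim (fun q : Σ i, Y i => q.2 ∈ S q.1) (fun _ => True) p}

/-- The double mapping cylinder (homotopy pushout) of `f : X → Y` and `g : X → Z`. -/
abbrev DblCyl {X Y Z : Type*} [TopologicalSpace X] [TopologicalSpace Y] [TopologicalSpace Z]
    (f : C(X, Y)) (g : C(X, Z)) : Type _ :=
  Quot (fun a b : Y ⊕ (X × unitInterval) ⊕ Z =>
    (∃ x, a = Sum.inl (f x) ∧ b = Sum.inr (Sum.inl (x, 0))) ∨
    (∃ x, a = Sum.inr (Sum.inr (g x)) ∧ b = Sum.inr (Sum.inl (x, 1))))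

/-- The homotopy cofibre (mapping cone) of `f : X → Y`. -/
abbrev hCofiber {X Y : Type*} [TopologicalSpace X] [TopologicalSpace Y] (f : C(X, Y)) :
    Type _ :=
  DblCyl f (ContinuousMap.const X PUnit.unit)

/-- The basepoint (cone point) of the homotopy cofibre. -/
def hCofiber.pt {X Y : Type*} [TopologicalSpace X] [TopologicalSpace Y] (f : C(X, Y)) :
    hCofiber f :=
  Quot.mk _ (Sum.inr (Sum.inr PUnit.unit))

/-! ### Simplicial complexes and polyhedral products -/

/-- An (abstract) simplicial complex on the vertex set `ι`, allowing ghost vertices: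
a downward closed collection of finite subsets of `ι` containing the empty face. -/
def IsSimplicialComplex {ι : Type*} (K : Set (Finset ι)) : Prop :=
  ∅ ∈ K ∧ ∀ σ ∈ K, ∀ τ ⊆ σ, τ ∈ K

/-- `K` is shifted with respect to the order `r` on the vertices. -/
def ShiftedWrt {ι : Type*} [DecidableEq ι] (K : Set (Finset ι)) (r : ι → ι → Prop) : Prop :=
  ∀ σ ∈ K, ∀ ν ∈ σ, ∀ ν', r ν' ν → insert ν' (σ.erase ν) ∈ K

/-- `K` is shifted: there is an ordering of the vertices for which whenever `σ ∈ K`,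
`ν ∈ σ` and `ν' < ν`, also `(σ - ν) ∪ ν' ∈ K`. -/
def IsShifted {n : ℕ} (K : Set (Finset (Fin n))) : Prop :=
  ∃ e : Fin n ≃ Fin n, ShiftedWrt K (fun a b => e a < e b)

/-- For `σ ⊆ ι` and pairs `(Xᵢ, Aᵢ)`, the block `(X, A)^σ = ∏ Yᵢ` with `Yᵢ = Xᵢ` if
`i ∈ σ` and `Yᵢ = Aᵢ` otherwise, as a subset of `∏ᵢ Xᵢ`. -/
def polyPiece {ι : Type*} (σ : Finset ι) {X : ι → Type*} (A : ∀ i, Set (X i)) :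
    Set (∀ i, X i) :=
  {f | ∀ i, i ∉ σ → f i ∈ A i}

/-- The polyhedral product `(X, A)^K = ⋃_{σ ∈ K} (X, A)^σ` of the pairs `(Xᵢ, Aᵢ)`,
as a subset of `∏ᵢ Xᵢ`. -/
def polyProdXA {ι : Type*} (K : Set (Finset ι)) {X : ι → Type*} (A : ∀ i, Set (X i)) :
    Set (∀ i, X i) :=
  {f | ∃ σ ∈ K, ∀ i, i ∉ σ → f i ∈ A i}

/-- The polyhedral product `(CX, X)^K` of the pairs `(CXᵢ, Xᵢ)`, as a subset
of `∏ᵢ CXᵢ`. -/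
def polyProd {ι : Type*} (K : Set (Finset ι)) (X : ι → Type*)
    [∀ i, TopologicalSpace (X i)] : Set (∀ i, Cone (X i)) :=
  polyProdXA K (fun i => Set.range (Cone.incl (X := X i)))

/-- The canonical basepoint of `(CX, X)^K` (all coordinates at the basepoints,
included in the cones); it lies in the polyhedral product as soon as `∅ ∈ K`. -/
def polyProd.pt {ι : Type*} {K : Set (Finset ι)} {X : ι → Type*}
    [∀ i, TopologicalSpace (X i)] (pt : ∀ i, X i) (h : ∅ ∈ K) : ↥(polyProd K X) :=
  ⟨fun i => Cone.incl (pt i), ⟨∅, h, fun i _ => ⟨pt i, rfl⟩⟩⟩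

/-- The geometric realization of a simplicial complex `K` on the (finite) vertex set `ι`:
convex weightings of the vertices whose support is a face of `K`. -/
def geomReal {ι : Type*} [Fintype ι] (K : Set (Finset ι)) : Set (ι → ℝ) :=
  {w | (∀ v, 0 ≤ w v) ∧ (∑ v, w v = 1) ∧ ∃ σ ∈ K, {v | w v ≠ 0} = (σ : Set ι)}

/-- `X` is (homeomorphic to the geometric realization of) a CW-complex. -/
def IsCWComplex (X : Type u) [TopologicalSpace X] : Prop :=
  ∃ (Y : TopCat.{u}) (_ : TopCat.CWComplex Y), Nonempty (Y ≃ₜ X)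

lemma polyProd_mono {ι : Type*} {K₁ K₂ : Set (Finset ι)} (h : K₁ ⊆ K₂)
    {X : ι → Type*} [∀ i, TopologicalSpace (X i)] :
    polyProd K₁ X ⊆ polyProd K₂ X :=
  fun _ ⟨τ, hτ, hf⟩ => ⟨τ, h hτ, hf⟩

/-- A membership criterion for `(CX, X)^K`: a point whose coordinates in `σ` come from a
point of `(CX, X)^{∂σ}` and whose coordinates outside of `σ` lie in `Xᵢ ⊆ CXᵢ` belongs to
`(CX, X)^K`, provided every proper face of `σ` belongs to `K`. -/
lemma mem_polyProd_of_boundary {ι : Type*}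
    {K : Set (Finset ι)} {σ : Finset ι} (hσ : ∀ τ, τ ⊂ σ → τ ∈ K)
    {X : ι → Type*} [∀ i, TopologicalSpace (X i)]
    (c : ↥(polyProd {τ : Finset ↥σ | τ ≠ Finset.univ} (fun i : ↥σ => X i)))
    (f : ∀ i, Cone (X i))
    (hf₁ : ∀ i (h : i ∈ σ), f i = c.1 ⟨i, h⟩)
    (hf₂ : ∀ i, i ∉ σ → f i ∈ Set.range (Cone.incl (X := X i))) :
    f ∈ polyProd K X := by
  obtain ⟨τ, hτ, hc⟩ := c.2
  refine ⟨τ.map (Function.Embedding.subtype _), ?_, ?_⟩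
  · refine hσ _ (lt_of_le_of_ne ?_ ?_)
    · intro i hi
      simp only [Finset.mem_map, Function.Embedding.coe_subtype] at hi
      obtain ⟨a, _, rfl⟩ := hi
      exact a.2
    · intro hρσ
      apply hτ
      refine Finset.eq_univ_iff_forall.mpr (fun a => ?_)
      have ha : (a : ι) ∈ τ.map (Function.Embedding.subtype _) := by
        rw [hρσ]; exact a.2
      simp only [Finset.mem_map, Function.Embedding.coe_subtype] at ha
      obtain ⟨b, hb, hba⟩ := ha
      exact (Subtype.ext hba) ▸ hb
  · intro i hi
    by_cases h : i ∈ σ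
    · rw [hf₁ i h]
      refine hc ⟨i, h⟩ (fun hmem => hi ?_)
      exact Finset.mem_map.mpr ⟨⟨i, h⟩, hmem, rfl⟩
    · exact hf₂ i h

/-- The canonical map `(CX, X)^{∂σ} × ∏_{i ∉ σ} Xᵢ ⟶ (CX, X)^K`, available whenever every
proper face of `σ` is a face of `K`. -/
def boundarySmashMap {ι : Type*} [DecidableEq ι] {K : Set (Finset ι)} {σ : Finset ι}
    (hσ : ∀ τ, τ ⊂ σ → τ ∈ K)
    (X : ι → Type*) [∀ i, TopologicalSpace (X i)] :
    C(↥(polyProd {τ : Finset ↥σ | τ ≠ Finset.univ} (fun i : ↥σ => X i)) ×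
        (∀ j : {j : ι // j ∉ σ}, X j),
      ↥(polyProd K X)) :=
  ⟨fun p => ⟨fun i => if h : i ∈ σ then p.1.1 ⟨i, h⟩ else Cone.incl (p.2 ⟨i, h⟩),
      mem_polyProd_of_boundary hσ p.1 _ (fun i h => dif_pos h)
        (fun i h => by rw [dif_neg h]; exact ⟨p.2 ⟨i, h⟩, rfl⟩)⟩,
    by
      apply Continuous.subtype_mk
      apply continuous_pi
      intro i
      by_cases h : i ∈ σ
      · simp only [dif_pos h]
        exact (continuous_apply _).comp (continuous_subtype_val.comp continuous_fst)
      · simp only [dif_neg h]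
        exact Cone.incl.continuous.comp ((continuous_apply _).comp continuous_snd)⟩

namespace Cone

variable {X : Type*} [TopologicalSpace X]

/-- The apex is written as `(y, 1)` so that `ray x y` and `(ray y y).symm` compose
definitionally. -/
def ray (x y : X) : Path (Cone.incl x) (Collapse.mk _ (y, 1)) where
  toFun t := Collapse.mk _ (x, t)
  continuous_toFun := Collapse.continuous_mk.comp (continuous_const.prodMk continuous_id)
  source' := rfl
  target' := Quot.sound ⟨rfl, rfl⟩

def pathViaApex (x y : X) : Path (Cone.incl x) (Cone.incl y) :=
  (ray x y).trans (ray y y).symm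

lemma continuous_pathViaApex_extend :
    Continuous fun p : (X × X) × ℝ => (pathViaApex p.1.1 p.1.2).extend p.2 := by
  have hray : Continuous ↿fun p : X × X => ray p.1 p.2 :=
    Collapse.continuous_mk.comp
      ((continuous_fst.comp continuous_fst).prodMk continuous_snd)
  have hray' : Continuous ↿fun p : X × X => ray p.2 p.2 :=
    Collapse.continuous_mk.comp ((continuous_snd.comp continuous_fst).prodMk continuous_snd)
  exact Path.continuous_uncurry_extend_of_continuous_family _
    (Path.trans_continuous_family _ hray _ (Path.symm_continuous_family _ hray'))

lemma pathViaApex_extend_mem_range (x y : X) {s : ℝ} (hs : s ≤ 0 ∨ 1 ≤ s) :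
    (pathViaApex x y).extend s ∈ Set.range (Cone.incl (X := X)) := by
  rcases hs with hs | hs
  · exact ⟨x, ((pathViaApex x y).extend_of_le_zero hs).symm⟩
  · exact ⟨y, ((pathViaApex x y).extend_of_one_le hs).symm⟩

end Cone

lemma mem_polyProd_of_subsingleton {ι : Type*} {K : Set (Finset ι)} (hK0 : ∅ ∈ K)
    {X : ι → Type*} [∀ i, TopologicalSpace (X i)] {f : ∀ i, Cone (X i)}
    (hsub : {i | f i ∉ Set.range (Cone.incl (X := X i))}.Subsingleton)
    (hvert : ∀ i, f i ∉ Set.range (Cone.incl (X := X i)) → {i} ∈ K) :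
    f ∈ polyProd K X := by
  by_cases h : ∃ i, f i ∉ Set.range Cone.incl
  · obtain ⟨i, hi⟩ := h
    refine ⟨{i}, hvert i hi, fun j hj => ?_⟩
    by_contra hfj
    exact hj (Finset.mem_singleton.mpr (hsub hfj hi))
  · push Not at h
    exact ⟨∅, hK0, fun j _ => h j⟩

def polyProd.ofBase {ι : Type*} {K : Set (Finset ι)} (hK0 : ∅ ∈ K)
    {X : ι → Type*} [∀ i, TopologicalSpace (X i)] {Z : Type*} [TopologicalSpace Z]
    (g : C(Z, ∀ i, X i)) : C(Z, polyProd K X) where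
  toFun z := ⟨fun i => Cone.incl (g z i), ∅, hK0, fun i _ => ⟨g z i, rfl⟩⟩
  continuous_toFun := Continuous.subtype_mk
    (continuous_pi fun i => Cone.incl.continuous.comp ((continuous_apply i).comp g.continuous)) _

section Staggered

open unitInterval

variable {n : ℕ} (m : ℕ)

/-- At time `t` the `i`-th coordinate is at parameter `u - i` of its path over the apex, where
`u = (1 - t) m + t n`: the coordinates `i ≥ m` leave the base one after the other, so at every
time the point lies in a block `(CX, X)^{i}`. -/
def staggeredTime (t : I) (i : Fin n) : ℝ := (1 - t) * m + t * n - i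

variable {m}

@[fun_prop]
lemma continuous_staggeredTime (i : Fin n) : Continuous fun t => staggeredTime m t i := by
  unfold staggeredTime
  fun_prop

lemma staggeredTime_zero_nonpos {i : Fin n} (hi : m ≤ (i : ℕ)) : staggeredTime m 0 i ≤ 0 := by
  have : (m : ℝ) ≤ i := by exact_mod_cast hi
  simp only [staggeredTime, Set.Icc.coe_zero]
  linarith

lemma one_le_staggeredTime_one (i : Fin n) : 1 ≤ staggeredTime m 1 i := by
  have : (i : ℝ) + 1 ≤ n := by exact_mod_cast i.isLt
  simp only [staggeredTime, Set.Icc.coe_one]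
  linarith

lemma one_le_staggeredTime_of_lt (t : I) {i : Fin n} (hi : (i : ℕ) < m) :
    1 ≤ staggeredTime m t i := by
  have hm : (i : ℝ) + 1 ≤ m := by exact_mod_cast hi
  have hn : (i : ℝ) + 1 ≤ n := by exact_mod_cast i.isLt
  have ht0 : (0 : ℝ) ≤ t := t.2.1
  have ht1 : (t : ℝ) ≤ 1 := t.2.2
  simp only [staggeredTime]
  nlinarith

lemma eq_of_staggeredTime_mem_Ioo (t : I) {i j : Fin n}
    (hi : staggeredTime m t i ∈ Set.Ioo 0 1) (hj : staggeredTime m t j ∈ Set.Ioo 0 1) :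
    i = j := by
  simp only [staggeredTime, Set.mem_Ioo] at hi hj
  have hij : (i : ℕ) < j + 1 := by exact_mod_cast (by linarith : (i : ℝ) < j + 1)
  have hji : (j : ℕ) < i + 1 := by exact_mod_cast (by linarith : (j : ℝ) < i + 1)
  exact Fin.ext (by omega)

variable {K : Set (Finset (Fin n))} {X : Fin n → Type*} [∀ i, TopologicalSpace (X i)]

lemma staggered_mem_polyProd (hK0 : ∅ ∈ K)
    (hKvert : ∀ i : Fin n, m ≤ (i : ℕ) → ({i} : Finset (Fin n)) ∈ K)
    (pt x : ∀ i, X i) (t : I) :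
    (fun i => (Cone.pathViaApex (x i) (pt i)).extend (staggeredTime m t i)) ∈ polyProd K X := by
  have moving : ∀ i, (Cone.pathViaApex (x i) (pt i)).extend (staggeredTime m t i) ∉
      Set.range Cone.incl → staggeredTime m t i ∈ Set.Ioo 0 1 := by
    intro i hi
    by_contra hs
    rw [Set.mem_Ioo, not_and_or, not_lt, not_lt] at hs
    exact hi (Cone.pathViaApex_extend_mem_range _ _ hs)
  refine mem_polyProd_of_subsingleton hK0
    (fun i hi j hj => eq_of_staggeredTime_mem_Ioo t (moving i hi) (moving j hj))
    (fun i hi => hKvert i (not_lt.mp fun him => ?_))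
  exact (moving i hi).2.not_ge (one_le_staggeredTime_of_lt t him)

theorem polyProd.ofBase_nullhomotopic (hK0 : ∅ ∈ K)
    (hKvert : ∀ i : Fin n, m ≤ (i : ℕ) → ({i} : Finset (Fin n)) ∈ K)
    (pt : ∀ i, X i) {Z : Type*} [TopologicalSpace Z] (g : C(Z, ∀ i, X i))
    (hg : ∀ z (i : Fin n), (i : ℕ) < m → g z i = pt i) :
    (polyProd.ofBase hK0 g).Nullhomotopic := by
  refine ⟨polyProd.pt pt hK0, ⟨
    { toFun := fun p => ⟨_, staggered_mem_polyProd hK0 hKvert pt (g p.2) p.1⟩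
      continuous_toFun := ?_
      map_zero_left := fun z => Subtype.ext (funext fun i => ?_)
      map_one_left := fun z => Subtype.ext (funext fun i => ?_) }⟩⟩
  · refine Continuous.subtype_mk (continuous_pi fun i => ?_) _
    exact Cone.continuous_pathViaApex_extend.comp
      (f := fun p : I × Z => ((g p.2 i, pt i), staggeredTime m p.1 i)) (by fun_prop)
  · rcases lt_or_ge (i : ℕ) m with him | him
    · exact ((Path.extend_of_one_le _ (one_le_staggeredTime_of_lt 0 him)).trans
        (congrArg Cone.incl (hg z i him).symm))
    · exact Path.extend_of_le_zero _ (staggeredTime_zero_nonpos him)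
  · exact Path.extend_of_one_le _ (one_le_staggeredTime_one i)

end Staggered

theorem restriction_nullhomotopic {n m : ℕ}
    (K : Set (Finset (Fin n)))
    (hK : IsSimplicialComplex K)
    (hKvert : ∀ i : Fin n, m ≤ (i : ℕ) → ({i} : Finset (Fin n)) ∈ K)
    (X : Fin n → Type) [∀ i, TopologicalSpace (X i)]
    (pt : ∀ i, X i) :
    ContinuousMap.Nullhomotopic
      (⟨fun xh : ∀ j : {j : Fin n // m ≤ (j : ℕ)}, X j =>
          ⟨fun i => if h : m ≤ (i : ℕ) then Cone.incl (xh ⟨i, h⟩) else Cone.incl (pt i),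
            ⟨∅, hK.1, fun i _ => by
              dsimp only
              by_cases h : m ≤ (i : ℕ)
              · rw [dif_pos h]; exact ⟨xh ⟨i, h⟩, rfl⟩
              · rw [dif_neg h]; exact ⟨pt i, rfl⟩⟩⟩,
          by
            apply Continuous.subtype_mk
            apply continuous_pi
            intro i
            by_cases h : m ≤ (i : ℕ)
            · simp only [dif_pos h]
              exact Cone.incl.continuous.comp (continuous_apply _)
            · simp only [dif_neg h]
              exact continuous_const⟩ :
        C((∀ j : {j : Fin n // m ≤ (j : ℕ)}, X j), ↥(polyProd K X))) := by
  let g : C(∀ j : {j : Fin n // m ≤ (j : ℕ)}, X j, ∀ i, X i) :=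
    ⟨fun xh i => if h : m ≤ (i : ℕ) then xh ⟨i, h⟩ else pt i,
      continuous_pi fun i => by
        by_cases h : m ≤ (i : ℕ)
        · simpa only [dif_pos h] using continuous_apply _
        · simpa only [dif_neg h] using continuous_const⟩
  convert polyProd.ofBase_nullhomotopic hK.1 hKvert pt g
    (fun xh i hi => dif_neg (not_le.mpr hi)) using 1
  ext xh i
  simp only [ContinuousMap.coe_mk, polyProd.ofBase, g]
  split_ifs <;> rfl
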